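/- Consider brackets μ₁ and μ₂ on ℝ⁶ given by μ₁(e₁,e₂)=√t e₅, μ₁(e₁,e₄)=(1/√t)e₆, μ₁(e₂,e₃)=−(1/√t)e₆, μ₁(e₃,e₄)=−√t e₅, and μ₂(e₁,e₃)=√t e₅, μ₂(e₂,e₄)=√t e₅, μ₂(e₁,e₄)=−(1/√t)e₆, μ₂(e₂,e₃)=(1/√t)e₆, for t ∈ (0,1]. Let g be the linear map sending e₁ ↦ (√2/2)(e₂+e₃), e₂ ↦ (√2/2)(−e₁+e₄), e₃ ↦ (√2/2)(−e₁−e₄), e₄ ↦ (√2/2)(−e₂+e₃), e₅ ↦ e₅, e₆ ↦ e₆. Then g is orthogonal, commutes with the standard J (Je₁=e₂, Je₃=e₄, Je₅=e₆), and g·μ₁ = μ₂. -/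
import Mathlib


open Real

/-- `μ¹_t` : `μ(e₁,e₂)=√t e₅`, `μ(e₁,e₄)=(1/√t)e₆`, `μ(e₂,e₃)=−(1/√t)e₆`,
`μ(e₃,e₄)=−√t e₅`. -/
noncomputable def mu1 (t : ℝ) (X Y : Fin 6 → ℝ) : Fin 6 → ℝ :=
  ![0, 0, 0, 0,
    Real.sqrt t * (X 0 * Y 1 - X 1 * Y 0) - Real.sqrt t * (X 2 * Y 3 - X 3 * Y 2),
    (1 / Real.sqrt t) * (X 0 * Y 3 - X 3 * Y 0)
      - (1 / Real.sqrt t) * (X 1 * Y 2 - X 2 * Y 1)]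

/-- `μ²_t` : `μ(e₁,e₃)=√t e₅`, `μ(e₂,e₄)=√t e₅`, `μ(e₁,e₄)=−(1/√t)e₆`,
`μ(e₂,e₃)=(1/√t)e₆`. -/
noncomputable def mu2 (t : ℝ) (X Y : Fin 6 → ℝ) : Fin 6 → ℝ :=
  ![0, 0, 0, 0,
    Real.sqrt t * (X 0 * Y 2 - X 2 * Y 0) + Real.sqrt t * (X 1 * Y 3 - X 3 * Y 1),
    -(1 / Real.sqrt t) * (X 0 * Y 3 - X 3 * Y 0)
      + (1 / Real.sqrt t) * (X 1 * Y 2 - X 2 * Y 1)]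

/-- The linear map `g`: `e₁ ↦ (√2/2)(e₂+e₃)`, `e₂ ↦ (√2/2)(−e₁+e₄)`,
`e₃ ↦ (√2/2)(−e₁−e₄)`, `e₄ ↦ (√2/2)(−e₂+e₃)`, `e₅ ↦ e₅`, `e₆ ↦ e₆`. -/
noncomputable def gmap (X : Fin 6 → ℝ) : Fin 6 → ℝ :=
  ![(Real.sqrt 2 / 2) * (-X 1 - X 2),
    (Real.sqrt 2 / 2) * (X 0 - X 3),
    (Real.sqrt 2 / 2) * (X 0 + X 3),
    (Real.sqrt 2 / 2) * (X 1 - X 2),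
    X 4, X 5]

/-- The standard complex structure on `ℝ⁶`: `Je₁=e₂`, `Je₃=e₄`, `Je₅=e₆`. -/
def Jstd (X : Fin 6 → ℝ) : Fin 6 → ℝ := ![-X 1, X 0, -X 3, X 2, -X 5, X 4]


lemma vec6_four (a b c d e f : ℝ) : ![a,b,c,d,e,f] (4 : Fin 6) = e := rfl
lemma vec6_five (a b c d e f : ℝ) : ![a,b,c,d,e,f] (5 : Fin 6) = f := rfl

lemma vec6_mk0 (a b c d e f : ℝ) (h : (0:ℕ) < 6) : ![a,b,c,d,e,f] ⟨0,h⟩ = a := rfl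
lemma vec6_mk1 (a b c d e f : ℝ) (h : (1:ℕ) < 6) : ![a,b,c,d,e,f] ⟨1,h⟩ = b := rfl
lemma vec6_mk2 (a b c d e f : ℝ) (h : (2:ℕ) < 6) : ![a,b,c,d,e,f] ⟨2,h⟩ = c := rfl
lemma vec6_mk3 (a b c d e f : ℝ) (h : (3:ℕ) < 6) : ![a,b,c,d,e,f] ⟨3,h⟩ = d := rfl
lemma vec6_mk4 (a b c d e f : ℝ) (h : (4:ℕ) < 6) : ![a,b,c,d,e,f] ⟨4,h⟩ = e := rfl
lemma vec6_mk5 (a b c d e f : ℝ) (h : (5:ℕ) < 6) : ![a,b,c,d,e,f] ⟨5,h⟩ = f := rfl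

/-- `g` is orthogonal, commutes with the standard `J`, and pushes
`μ¹_t` forward to `μ²_t`, i.e. `g(μ¹_t(X,Y)) = μ²_t(gX, gY)` for all `X, Y`
(so `g·μ¹_t = μ²_t`). -/
theorem stmt12 (t : ℝ) (ht : t ∈ Set.Ioc (0 : ℝ) 1) :
    (∀ X Y : Fin 6 → ℝ,
      ∑ k : Fin 6, gmap X k * gmap Y k = ∑ k : Fin 6, X k * Y k) ∧
    (∀ X : Fin 6 → ℝ, gmap (Jstd X) = Jstd (gmap X)) ∧
    (∀ X Y : Fin 6 → ℝ, gmap (mu1 t X Y) = mu2 t (gmap X) (gmap Y)) := by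
  have h2 : Real.sqrt 2 * Real.sqrt 2 = 2 := Real.mul_self_sqrt (by norm_num)
  refine ⟨?_, ?_, ?_⟩
  · intro X Y
    simp only [gmap, Fin.sum_univ_six, Matrix.cons_val_zero, Matrix.cons_val_one,
      Matrix.head_cons, Matrix.cons_val_two, Matrix.tail_cons, Matrix.cons_val_three,
      Matrix.cons_val_four, vec6_five, vec6_four]
    linear_combination ((X 0 * Y 0 + X 1 * Y 1 + X 2 * Y 2 + X 3 * Y 3) / 2) * h2
  · intro X
    funext k
    fin_cases k <;>
      simp [gmap, Jstd, vec6_four, vec6_five] <;> ring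
  · intro X Y
    funext k
    fin_cases k <;>
      simp only [gmap, mu1, mu2, Matrix.cons_val_zero, Matrix.cons_val_one,
        Matrix.head_cons, Matrix.cons_val_two, Matrix.tail_cons, Matrix.cons_val_three,
        Matrix.cons_val_four, vec6_four, vec6_five, vec6_mk0, vec6_mk1, vec6_mk2, vec6_mk3, vec6_mk4, vec6_mk5, Fin.mk_zero, Fin.mk_one,
        Fin.isValue, one_div, mul_zero, neg_zero, zero_mul]
    · ring
    · ring
    · ring
    · ring
    · linear_combination (-(Real.sqrt t * (X 0 * Y 1 - X 1 * Y 0 - X 2 * Y 3 + X 3 * Y 2)) / 2) * h2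
    · linear_combination (-((Real.sqrt t)⁻¹ * (X 0 * Y 3 - X 3 * Y 0 - X 1 * Y 2 + X 2 * Y 1)) / 2) * h2
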